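/- The Gleeok 5-bit S-box S₅ is a bijection of 𝔽₂⁵; each of the five coordinate Boolean functions of S₅ has algebraic degree at most 2, and each of the five coordinate Boolean functions of its inverse S₅⁻¹ has algebraic degree at most 3. -/

import Mathlib

/-!
`S5` is the map `χ` of Keccak on five bits, `yᵢ = xᵢ + (xᵢ₊₁ + 1) xᵢ₊₂` with indices mod 5,
which is visibly quadratic. For odd length `χ` is invertible, and on five bits its inverse is
`xᵢ = yᵢ + (yᵢ₊₁ + 1) (yᵢ₊₂ + (yᵢ₊₃ + 1) yᵢ₊₄)`, visibly cubic. Both identities are finite checks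
over the 32 inputs; the degree bounds then follow from the behaviour of algebraic degree under
sums and products.
-/

/-- A Boolean function `f : 𝔽₂ⁿ → 𝔽₂` has algebraic degree at most `d`. -/
def HasAlgDegLE {n : ℕ} (f : (Fin n → ZMod 2) → ZMod 2) (d : ℕ) : Prop :=
  ∃ P : MvPolynomial (Fin n) (ZMod 2),
    P.totalDegree ≤ d ∧ ∀ x, MvPolynomial.eval x P = f x

/-- The integer `Σᵢ xᵢ · 2^(n−1−i)` encoded by a bit vector (big-endian: `x 0` is the
most significant bit). -/
def vecToNat {n : ℕ} (x : Fin n → ZMod 2) : ℕ :=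
  ∑ i, (x i).val * 2 ^ (n - 1 - i.val)

/-- The bit vector (big-endian) of a natural number. -/
def natToVec (n : ℕ) (v : ℕ) : Fin n → ZMod 2 :=
  fun i => ((v >>> (n - 1 - i.val)) % 2 : ℕ)

/-- The Gleeok 5-bit S-box, given by its truth table (in hexadecimal). -/
def S5 (x : Fin 5 → ZMod 2) : Fin 5 → ZMod 2 :=
  natToVec 5 ([0x0, 0x5, 0xa, 0xb, 0x14, 0x11, 0x16, 0x17,
               0x9, 0xc, 0x3, 0x2, 0xd, 0x8, 0xf, 0xe,
               0x12, 0x15, 0x18, 0x1b, 0x6, 0x1, 0x4, 0x7,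
               0x1a, 0x1d, 0x10, 0x13, 0x1e, 0x19, 0x1c, 0x1f].getD (vecToNat x) 0)

open MvPolynomial

namespace HasAlgDegLE

variable {n : ℕ} {f g : (Fin n → ZMod 2) → ZMod 2} {d e : ℕ}

theorem coord (i : Fin n) : HasAlgDegLE (fun x => x i) 1 :=
  ⟨X i, (totalDegree_X i).le, fun _ => eval_X i⟩

theorem const (c : ZMod 2) : HasAlgDegLE (fun _ : Fin n → ZMod 2 => c) 0 :=
  ⟨C c, (totalDegree_C c).le, fun _ => eval_C c⟩

theorem mono (hf : HasAlgDegLE f d) (hde : d ≤ e) : HasAlgDegLE f e :=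
  let ⟨P, hP, hPf⟩ := hf
  ⟨P, hP.trans hde, hPf⟩

theorem add (hf : HasAlgDegLE f d) (hg : HasAlgDegLE g d) :
    HasAlgDegLE (fun x => f x + g x) d :=
  let ⟨P, hP, hPf⟩ := hf
  let ⟨Q, hQ, hQg⟩ := hg
  ⟨P + Q, (totalDegree_add P Q).trans (max_le hP hQ), fun x => by rw [map_add, hPf, hQg]⟩

theorem mul (hf : HasAlgDegLE f d) (hg : HasAlgDegLE g e) :
    HasAlgDegLE (fun x => f x * g x) (d + e) :=
  let ⟨P, hP, hPf⟩ := hf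
  let ⟨Q, hQ, hQg⟩ := hg
  ⟨P * Q, (totalDegree_mul P Q).trans (add_le_add hP hQ), fun x => by rw [map_mul, hPf, hQg]⟩

theorem coord_add_one (i : Fin n) : HasAlgDegLE (fun x => x i + 1) 1 :=
  (coord i).add ((const 1).mono zero_le_one)

end HasAlgDegLE

def chi (x : Fin 5 → ZMod 2) : Fin 5 → ZMod 2 :=
  fun i => x i + (x (i + 1) + 1) * x (i + 2)

def chiInv (y : Fin 5 → ZMod 2) : Fin 5 → ZMod 2 :=
  fun i => y i + (y (i + 1) + 1) * (y (i + 2) + (y (i + 3) + 1) * y (i + 4))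

theorem S5_eq_chi : S5 = chi :=
  funext (by decide)

theorem chiInv_chi : Function.LeftInverse chiInv chi := by decide

theorem chi_chiInv : Function.RightInverse chiInv chi := by decide

theorem chi_bijective : Function.Bijective chi :=
  ⟨chiInv_chi.injective, chi_chiInv.surjective⟩

theorem invFun_chi : Function.invFun chi = chiInv :=
  Function.invFun_eq_of_injective_of_rightInverse chi_bijective.injective chi_chiInv

theorem hasAlgDegLE_chi (i : Fin 5) : HasAlgDegLE (fun x => chi x i) 2 :=
  ((HasAlgDegLE.coord i).mono one_le_two).add
    ((HasAlgDegLE.coord_add_one (i + 1)).mul (HasAlgDegLE.coord (i + 2)))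

theorem hasAlgDegLE_chiInv (i : Fin 5) : HasAlgDegLE (fun y => chiInv y i) 3 :=
  have inner : HasAlgDegLE (fun y => y (i + 2) + (y (i + 3) + 1) * y (i + 4)) 2 :=
    ((HasAlgDegLE.coord (i + 2)).mono one_le_two).add
      ((HasAlgDegLE.coord_add_one (i + 3)).mul (HasAlgDegLE.coord (i + 4)))
  ((HasAlgDegLE.coord i).mono (by norm_num)).add
    ((HasAlgDegLE.coord_add_one (i + 1)).mul inner)

/-- The Gleeok 5-bit S-box is a bijection, each of its coordinate Boolean functions has
algebraic degree at most 2, and each coordinate Boolean function of its inverse has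
algebraic degree at most 3. -/
theorem S5_bijective_and_degrees :
    Function.Bijective S5 ∧
    (∀ j : Fin 5, HasAlgDegLE (fun x => S5 x j) 2) ∧
    (∀ j : Fin 5, HasAlgDegLE (fun x => Function.invFun S5 x j) 3) := by
  rw [S5_eq_chi, invFun_chi]
  exact ⟨chi_bijective, hasAlgDegLE_chi, hasAlgDegLE_chiInv⟩
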